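/- arXiv:2402.07695 — 3 statements merged into one kernel-verified Lean document; each statement's English description precedes it below -/
import Mathlib

section
/- Let M, M' ⊆ M₀ be disjoint, finite, nonempty sets with M simple, and suppose M →_σ M' for some σ ∈ S₀. Then there exists m' ∈ M' such that M →_σ {m'}. -/
open Set Filter Metric
open scoped RealInnerProductSpace

set_option maxHeartbeats 1000000
noncomputable section

/-- Euclidean space `ℝ^d`. -/
abbrev Eucl (d : ℕ) : Type := EuclideanSpace ℝ (Fin d)

/-- The communication height `Θ(x, y)` between two points. -/
def commHeight {d : ℕ} (U : Eucl d → ℝ) (x y : Eucl d) : ℝ :=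
  ⨅ γ : Path x y, ⨆ t : unitInterval, U (γ t)

/-- The communication height `Θ(A, B)` between two sets, `+∞` if one is empty. -/
def commHeightSet {d : ℕ} (U : Eucl d → ℝ) (A B : Set (Eucl d)) : EReal :=
  ⨅ x ∈ A, ⨅ y ∈ B, (commHeight U x y : EReal)

/-- `M̃`: the local minima of `U` outside `M` of height at most `c = U(M)`. -/
def tildeSet {d : ℕ} (U : Eucl d → ℝ) (M : Set (Eucl d)) (c : ℝ) : Set (Eucl d) :=
  {m' | IsLocalMin U m' ∧ m' ∉ M ∧ U m' ≤ c}

/-- `Ξ(M) = Θ(M, M̃) − U(M) ∈ (0, ∞]`. -/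
def XiSet {d : ℕ} (U : Eucl d → ℝ) (M : Set (Eucl d)) (c : ℝ) : EReal :=
  commHeightSet U M (tildeSet U M c) - (c : EReal)

/-- `M` (simple, common value `c`) is bound. -/
def IsBound {d : ℕ} (U : Eucl d → ℝ) (M : Set (Eucl d)) (c : ℝ) : Prop :=
  (∃ m, M = {m}) ∨
    ∀ m ∈ M, ∀ m' ∈ M, (commHeight U m m' : EReal) < commHeightSet U M (tildeSet U M c)

/-- `A` is a connected component of `S`. -/
def IsCompOf {d : ℕ} (S A : Set (Eucl d)) : Prop :=
  ∃ x ∈ S, A = connectedComponentIn S x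

/-- The Hessian matrix of `U` at `x`. -/
def hessMat {d : ℕ} (U : Eucl d → ℝ) (x : Eucl d) : Matrix (Fin d) (Fin d) ℝ :=
  Matrix.of fun i j =>
    iteratedFDeriv ℝ 2 U x ![EuclideanSpace.single i (1 : ℝ), EuclideanSpace.single j (1 : ℝ)]

/-- `σ` is a saddle point of `U`. -/
def IsSaddle {d : ℕ} (U : Eucl d → ℝ) (σ : Eucl d) : Prop :=
  gradient U σ = 0 ∧
    ∃ hH : (hessMat U σ).IsHermitian,
      IsUnit (hessMat U σ).det ∧ ∃! i, hH.eigenvalues i < 0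

/-- `x ↷ y` : heteroclinic orbit of `ẋ = b(x)` from `x` to `y`. -/
def Hetero {d : ℕ} (b : Eucl d → Eucl d) (x y : Eucl d) : Prop :=
  ∃ φ : ℝ → Eucl d,
    (∀ t, HasDerivAt φ (b (φ t)) t) ∧
      Tendsto φ atBot (nhds x) ∧ Tendsto φ atTop (nhds y)

/-- `σ ↝ m`. -/
def ConnectsTo {d : ℕ} (U : Eucl d → ℝ) (b : Eucl d → Eucl d) (σ m : Eucl d) : Prop :=
  Hetero b σ m ∨
    ∃ (k : ℕ) (_ : 0 < k) (σs : Fin k → Eucl d) (ms : Fin (k + 1) → Eucl d),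
      (∀ i, IsSaddle U (σs i)) ∧ (∀ i, U (σs i) < U σ) ∧
        (∀ i : Fin k, IsLocalMin U (ms i.castSucc)) ∧
        ms (Fin.last k) = m ∧ Hetero b σ (ms 0) ∧
        ∀ i : Fin k, Hetero b (σs i) (ms i.castSucc) ∧ Hetero b (σs i) (ms i.succ)

/-- `σ ↝ M`. -/
def ConnectsToSet {d : ℕ} (U : Eucl d → ℝ) (b : Eucl d → Eucl d) (σ : Eucl d)
    (M : Set (Eucl d)) : Prop :=
  ∃ m ∈ M, ConnectsTo U b σ m

/-- `σ ↷ M`. -/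
def HeteroToSet {d : ℕ} (b : Eucl d → Eucl d) (σ : Eucl d) (M : Set (Eucl d)) : Prop :=
  ∃ m ∈ M, Hetero b σ m

/-- `M →_σ M'`. -/
def AdjacentVia {d : ℕ} (U : Eucl d → ℝ) (b : Eucl d → Eucl d) (M M' : Set (Eucl d))
    (c : ℝ) (σ : Eucl d) : Prop :=
  IsSaddle U σ ∧ ConnectsToSet U b σ M ∧ HeteroToSet b σ M' ∧
    (U σ : EReal) = commHeightSet U M (tildeSet U M c) ∧
    (U σ : EReal) = commHeightSet U M M'

/-- Unstable-manifold property. -/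
def UnstableManifoldProperty {d : ℕ} (U : Eucl d → ℝ) (b : Eucl d → Eucl d) : Prop :=
  ∀ σ : Eucl d, IsSaddle U σ →
    ∃ r' > (0 : ℝ), ∃ Ap Am : Set (Eucl d),
      Ap ≠ Am ∧
      IsCompOf (ball σ r' ∩ {x | U x < U σ}) Ap ∧
      IsCompOf (ball σ r' ∩ {x | U x < U σ}) Am ∧
      (∀ C, IsCompOf (ball σ r' ∩ {x | U x < U σ}) C → C = Ap ∨ C = Am) ∧
      ∃ mp mm : Eucl d, IsLocalMin U mp ∧ IsLocalMin U mm ∧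
        ∃ tp tm : ℝ, ∃ φp φm : ℝ → Eucl d,
          (∀ t, HasDerivAt φp (b (φp t)) t) ∧ (∀ t, HasDerivAt φm (b (φm t)) t) ∧
          Tendsto φp atBot (nhds σ) ∧ Tendsto φp atTop (nhds mp) ∧
          Tendsto φm atBot (nhds σ) ∧ Tendsto φm atTop (nhds mm) ∧
          φp '' Iic tp ⊆ Ap ∧ φm '' Iic tm ⊆ Am

variable {d : ℕ} {U : Eucl d → ℝ}

instance pathNonempty (x y : Eucl d) : Nonempty (Path x y) :=
  ⟨PathConnectedSpace.somePath x y⟩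

lemma sup_bddAbove (hU : Continuous U) (x y : Eucl d) (γ : Path x y) :
    BddAbove (range fun t : unitInterval => U (γ t)) :=
  (isCompact_range ((hU.comp γ.continuous))).bddAbove

lemma ux_le_sup (hU : Continuous U) (x y : Eucl d) (γ : Path x y) :
    U x ≤ ⨆ t : unitInterval, U (γ t) := by
  have := le_ciSup (sup_bddAbove hU x y γ) (0 : unitInterval)
  simpa using this

lemma commHeight_le_path (hU : Continuous U) {x y : Eucl d} (γ : Path x y) :
    commHeight U x y ≤ ⨆ t : unitInterval, U (γ t) :=
  ciInf_le ⟨U x, by rintro r ⟨γ', rfl⟩; exact ux_le_sup hU x y γ'⟩ γ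

lemma commHeight_le_of_forall (hU : Continuous U) {x y : Eucl d} (γ : Path x y)
    {K : ℝ} (h : ∀ t, U (γ t) ≤ K) : commHeight U x y ≤ K :=
  (commHeight_le_path hU γ).trans (ciSup_le h)

lemma commHeight_symm (hU : Continuous U) (x y : Eucl d) :
    commHeight U x y = commHeight U y x := by
  have key : ∀ a b : Eucl d, commHeight U a b ≤ commHeight U b a := by
    intro a b
    refine le_ciInf fun γ => ?_
    refine commHeight_le_of_forall hU γ.symm fun t => ?_
    exact le_ciSup (sup_bddAbove hU b a γ) (unitInterval.symm t)
  exact le_antisymm (key x y) (key y x)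

lemma commHeight_triangle (hU : Continuous U) (x y z : Eucl d) :
    commHeight U x z ≤ max (commHeight U x y) (commHeight U y z) := by
  by_contra h
  push_neg at h
  obtain ⟨γ1, h1⟩ := exists_lt_of_ciInf_lt (lt_of_le_of_lt (le_max_left _ (commHeight U y z)) h)
  obtain ⟨γ2, h2⟩ := exists_lt_of_ciInf_lt (lt_of_le_of_lt (le_max_right (commHeight U x y) _) h)
  have : commHeight U x z ≤ ⨆ t : unitInterval, U ((γ1.trans γ2) t) :=
    commHeight_le_path hU _
  have hsup : (⨆ t : unitInterval, U ((γ1.trans γ2) t)) < commHeight U x z := by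
    refine lt_of_le_of_lt (ciSup_le fun t => ?_) (max_lt h1 h2)
    rw [Path.trans_apply]
    split_ifs
    · exact le_max_of_le_left (le_ciSup (sup_bddAbove hU x y γ1) _)
    · exact le_max_of_le_right (le_ciSup (sup_bddAbove hU y z γ2) _)
  exact absurd (this.trans_lt hsup) (lt_irrefl _)

def linePath (x y : Eucl d) : Path x y where
  toFun s := x + (s : ℝ) • (y - x)
  continuous_toFun := by continuity
  source' := by simp
  target' := by simp

lemma linePath_mem_ball {x y : Eucl d} {δ : ℝ} (h : dist y x < δ) (s : unitInterval) :
    linePath x y s ∈ ball x δ := by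
  have hs : (s : ℝ) ∈ Icc (0:ℝ) 1 := s.2
  have : dist (linePath x y s) x ≤ dist y x := by
    simp only [linePath, Path.coe_mk_mk, dist_eq_norm, add_sub_cancel_left, norm_smul,
      Real.norm_eq_abs, abs_of_nonneg hs.1]
    calc (s:ℝ) * ‖y - x‖ ≤ 1 * ‖y - x‖ := by
          exact mul_le_mul_of_nonneg_right hs.2 (norm_nonneg _)
      _ = ‖y - x‖ := one_mul _
  exact mem_ball.2 (lt_of_le_of_lt this h)

def orbitPath (φ : ℝ → Eucl d) (hφ : Continuous φ) (a b : ℝ) : Path (φ a) (φ b) where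
  toFun s := φ (a + (s : ℝ) * (b - a))
  continuous_toFun := by continuity
  source' := by simp
  target' := by simp

lemma orbit_antitone {ℓ : Eucl d → Eucl d} {b : Eucl d → Eucl d}
    (hU : ContDiff ℝ 2 U)
    (horth : ∀ x, (inner ℝ (gradient U x) (ℓ x) : ℝ) = 0)
    (hb : ∀ x, b x = -(gradient U x + ℓ x))
    {φ : ℝ → Eucl d} (hφ : ∀ t, HasDerivAt φ (b (φ t)) t) :
    Antitone (U ∘ φ) := by
  have hdiff : ∀ x, DifferentiableAt ℝ U x := fun x =>
    (hU.differentiable (by norm_num)).differentiableAt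
  have hder : ∀ t, HasDerivAt (U ∘ φ) (inner ℝ (gradient U (φ t)) (b (φ t)) : ℝ) t := by
    intro t
    have hg := (hdiff (φ t)).hasGradientAt
    have hf := hg.hasFDerivAt
    have := hf.comp_hasDerivAt t (hφ t)
    simpa using this
  apply antitone_of_deriv_nonpos
  · exact fun t => ((hder t).differentiableAt)
  · intro t
    rw [(hder t).deriv, hb]
    have h0 := horth (φ t)
    have := real_inner_self_nonneg (x := gradient U (φ t))
    rw [inner_neg_right, inner_add_right, h0]
    linarith

lemma hetero_bounds {ℓ : Eucl d → Eucl d} {b : Eucl d → Eucl d}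
    (hU : ContDiff ℝ 2 U)
    (horth : ∀ x, (inner ℝ (gradient U x) (ℓ x) : ℝ) = 0)
    (hb : ∀ x, b x = -(gradient U x + ℓ x))
    {σ m : Eucl d} {φ : ℝ → Eucl d}
    (hφ : ∀ t, HasDerivAt φ (b (φ t)) t)
    (hbot : Tendsto φ atBot (nhds σ)) (htop : Tendsto φ atTop (nhds m)) :
    commHeight U σ m ≤ U σ ∧ U m ≤ U σ := by
  have hUc : Continuous U := hU.continuous
  have hφc : Continuous φ := continuous_iff_continuousAt.2 fun t => (hφ t).continuousAt
  have hanti := orbit_antitone hU horth hb hφ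
  have hUbot : Tendsto (U ∘ φ) atBot (nhds (U σ)) := (hUc.tendsto σ).comp hbot
  have hUtop : Tendsto (U ∘ φ) atTop (nhds (U m)) := (hUc.tendsto m).comp htop
  have hle : ∀ t, U (φ t) ≤ U σ := by
    intro t
    refine ge_of_tendsto hUbot ?_
    filter_upwards [eventually_le_atBot t] with s hs
    exact hanti hs
  have hm : U m ≤ U σ := le_of_tendsto hUtop (Eventually.of_forall hle)
  refine ⟨le_of_forall_pos_le_add fun ε hε => ?_, hm⟩
  obtain ⟨δ1, hδ1, hb1⟩ := Metric.continuousAt_iff.1 (hUc.continuousAt (x := σ)) ε hε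
  obtain ⟨δ2, hδ2, hb2⟩ := Metric.continuousAt_iff.1 (hUc.continuousAt (x := m)) ε hε
  obtain ⟨t1, ht1⟩ := (hbot.eventually (Metric.ball_mem_nhds σ hδ1)).exists
  obtain ⟨t2, ht2⟩ := (htop.eventually (Metric.ball_mem_nhds m hδ2)).exists
  have c1 : commHeight U σ (φ t1) ≤ U σ + ε := by
    refine commHeight_le_of_forall hUc (linePath σ (φ t1)) fun s => ?_
    have hmem := linePath_mem_ball (mem_ball.1 ht1) s
    have := hb1 (mem_ball.1 hmem)
    have := abs_lt.1 (by simpa [Real.dist_eq] using this)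
    linarith [this.2]
  have c2 : commHeight U (φ t1) (φ t2) ≤ U σ + ε := by
    refine commHeight_le_of_forall hUc (orbitPath φ hφc t1 t2) fun s => ?_
    have := hle (t1 + (s : ℝ) * (t2 - t1))
    simpa [orbitPath] using this.trans (by linarith)
  have c3 : commHeight U (φ t2) m ≤ U σ + ε := by
    have : commHeight U m (φ t2) ≤ U σ + ε := by
      refine commHeight_le_of_forall hUc (linePath m (φ t2)) fun s => ?_
      have hmem := linePath_mem_ball (mem_ball.1 ht2) s
      have := hb2 (mem_ball.1 hmem)
      have := abs_lt.1 (by simpa [Real.dist_eq] using this)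
      linarith [this.2, hm]
    rwa [commHeight_symm hUc] at this
  calc commHeight U σ m ≤ max (commHeight U σ (φ t1)) (commHeight U (φ t1) m) :=
        commHeight_triangle hUc _ _ _
    _ ≤ max (U σ + ε) (max (commHeight U (φ t1) (φ t2)) (commHeight U (φ t2) m)) := by
        exact max_le_max c1 (commHeight_triangle hUc _ _ _)
    _ ≤ U σ + ε := by
        exact max_le le_rfl (max_le c2 c3)
lemma hetero_bounds' {ℓ : Eucl d → Eucl d} {b : Eucl d → Eucl d}
    (hU : ContDiff ℝ 2 U)
    (horth : ∀ x, (inner ℝ (gradient U x) (ℓ x) : ℝ) = 0)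
    (hb : ∀ x, b x = -(gradient U x + ℓ x))
    {σ m : Eucl d} (h : Hetero b σ m) :
    commHeight U σ m ≤ U σ ∧ U m ≤ U σ := by
  obtain ⟨φ, hφ, hbot, htop⟩ := h
  exact hetero_bounds hU horth hb hφ hbot htop

lemma connects_height {ℓ : Eucl d → Eucl d} {b : Eucl d → Eucl d}
    (hU : ContDiff ℝ 2 U)
    (horth : ∀ x, (inner ℝ (gradient U x) (ℓ x) : ℝ) = 0)
    (hb : ∀ x, b x = -(gradient U x + ℓ x))
    {σ m : Eucl d} (h : ConnectsTo U b σ m) :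
    commHeight U σ m ≤ U σ := by
  have hUc : Continuous U := hU.continuous
  rcases h with h | ⟨k, hk, σs, ms, _, hlt, _, hlast, h0, hstep⟩
  · exact (hetero_bounds' hU horth hb h).1
  · have key : ∀ i : Fin (k + 1), commHeight U σ (ms i) ≤ U σ := by
      intro i
      induction i using Fin.induction with
      | zero => exact (hetero_bounds' hU horth hb h0).1
      | succ i ih =>
        have hA : commHeight U (ms i.castSucc) (σs i) ≤ U σ := by
          rw [commHeight_symm hUc]
          exact (hetero_bounds' hU horth hb (hstep i).1).1.trans (hlt i).le
        have hB : commHeight U (σs i) (ms i.succ) ≤ U σ :=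
          (hetero_bounds' hU horth hb (hstep i).2).1.trans (hlt i).le
        calc commHeight U σ (ms i.succ)
            ≤ max (commHeight U σ (ms i.castSucc))
                (commHeight U (ms i.castSucc) (ms i.succ)) :=
              commHeight_triangle hUc _ _ _
          _ ≤ max (U σ) (max (commHeight U (ms i.castSucc) (σs i))
                (commHeight U (σs i) (ms i.succ))) :=
              max_le_max ih (commHeight_triangle hUc _ _ _)
          _ ≤ U σ := max_le le_rfl (max_le hA hB)
    have := key (Fin.last k)
    rwa [hlast] at this

theorem statement2 {d : ℕ} (hd : 1 ≤ d)
    (U : Eucl d → ℝ) (hU : ContDiff ℝ 2 U)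
    (ℓ : Eucl d → Eucl d) (hℓ : ContDiff ℝ 1 ℓ)
    (horth : ∀ x, (inner ℝ (gradient U x) (ℓ x) : ℝ) = 0)
    (b : Eucl d → Eucl d) (hb : ∀ x, b x = -(gradient U x + ℓ x))
    (M M' : Set (Eucl d)) (hdisj : Disjoint M M')
    (hMfin : M.Finite) (hM'fin : M'.Finite)
    (hMne : M.Nonempty) (hM'ne : M'.Nonempty)
    (hMloc : ∀ m ∈ M, IsLocalMin U m) (hM'loc : ∀ m ∈ M', IsLocalMin U m)
    (c : ℝ) (hc : ∀ m ∈ M, U m = c)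
    (σ : Eucl d) (hadj : AdjacentVia U b M M' c σ) :
    ∃ m' ∈ M', AdjacentVia U b M {m'} c σ := by
  obtain ⟨hsad, hconn, hhet, heq1, heq2⟩ := hadj
  obtain ⟨m', hm'M', hhet'⟩ := hhet
  obtain ⟨m, hmM, hconn2⟩ := hconn
  have hUc : Continuous U := hU.continuous
  have h1 : commHeight U σ m ≤ U σ := connects_height hU horth hb hconn2
  have h2 : commHeight U σ m' ≤ U σ := (hetero_bounds' hU horth hb hhet').1
  have h3 : commHeight U m m' ≤ U σ := by
    refine (commHeight_triangle hUc m σ m').trans (max_le ?_ h2)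
    rwa [commHeight_symm hUc]
  refine ⟨m', hm'M', hsad, ⟨m, hmM, hconn2⟩, ⟨m', rfl, hhet'⟩, heq1, le_antisymm ?_ ?_⟩
  · rw [heq2]
    refine iInf_mono fun x => iInf_mono fun _ => ?_
    exact iInf_le_iInf_of_subset (singleton_subset_iff.2 hm'M')
  · calc commHeightSet U M {m'} ≤ ((commHeight U m m' : ℝ) : EReal) := by
          exact (iInf₂_le m hmM).trans (iInf₂_le m' (mem_singleton m'))
      _ ≤ ((U σ : ℝ) : EReal) := EReal.coe_le_coe_iff.2 h3


end
end

section
/- Let a ≥ 2 and let M₁, …, M_a ⊆ M₀ be pairwise disjoint, finite, nonempty, simple and bound sets such that Θ(Mᵢ, M̃ᵢ) = Θ(Mᵢ, Mᵢ₊₁) for every i ∈ {1, …, a−1}, and such that Ξ(M₁) ≥ Ξ(Mⱼ) for all j ∈ {2, …, a−1}. If in addition Ξ(M_a) ≥ Ξ(M₁) (inequalities in (0, +∞]), then U(M₁) ≥ U(M_a) and Θ(M₁, M̃₁) = Θ(M₁, M_a). -/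
open Set Filter Metric
open scoped RealInnerProductSpace

noncomputable section

/-!
Write `Θᵢ = Θ(Mᵢ, M̃ᵢ)`. Along the chain one shows `Θ(M₁, Mⱼ) ≤ Θ₁` by induction on `j`: the
communication height is an ultrametric-type quantity, and crossing `Mⱼ` (bound) and passing on to
`Mⱼ₊₁` (adjacency) costs at most `Θⱼ`. Moreover `Θⱼ ≤ Θ₁`: either `U(Mⱼ) ≤ U(M₁)`, and this is
`Ξ(Mⱼ) ≤ Ξ(M₁)`, or `U(Mⱼ) > U(M₁)`, so that `M₁ ⊆ M̃ⱼ` and `Θⱼ ≤ Θ(M₁, Mⱼ) ≤ Θ₁`.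
For `j = a` the second alternative would give `Θ_a ≤ Θ₁` together with `U(M_a) > U(M₁)`, hence
`Ξ(M_a) < Ξ(M₁)`. So `U(M_a) ≤ U(M₁)`, i.e. `M_a ⊆ M̃₁`, and `Θ₁ ≤ Θ(M₁, M_a) ≤ Θ₁`.
-/

instance {d : ℕ} (x y : Eucl d) : Nonempty (Path x y) :=
  ⟨PathConnectedSpace.somePath x y⟩

namespace EReal

lemma le_of_sub_le_sub_of_le {x y : EReal} {c c' : ℝ} (h : x - c ≤ y - c') (hc : c ≤ c') :
    x ≤ y :=
  calc x = x - c + c := EReal.sub_add_cancel.symm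
    _ ≤ y - c' + c' := add_le_add h (EReal.coe_le_coe_iff.2 hc)
    _ = y := EReal.sub_add_cancel

lemma le_of_sub_coe_le_sub_coe {x y : EReal} {c c' : ℝ} (hy : y ≠ ⊤) (hy' : y ≠ ⊥)
    (hxy : x ≤ y) (h : y - c ≤ x - c') : c' ≤ c := by
  lift y to ℝ using ⟨hy, hy'⟩
  by_contra! hlt
  have : (y : EReal) - c' < y - c := by
    rw [← EReal.coe_sub, ← EReal.coe_sub, EReal.coe_lt_coe_iff]; linarith
  exact (h.trans (EReal.sub_le_sub hxy le_rfl)).not_gt this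

end EReal

variable {d : ℕ} {U : Eucl d → ℝ}

section commHeight

lemma bddAbove_range_comp_path (hUc : Continuous U) {x y : Eucl d} (γ : Path x y) :
    BddAbove (range fun t => U (γ t)) :=
  (isCompact_range (hUc.comp γ.continuous)).bddAbove

lemma le_iSup_comp_path (hUc : Continuous U) {x y : Eucl d} (γ : Path x y) :
    U x ≤ ⨆ t, U (γ t) := by
  simpa using le_ciSup (bddAbove_range_comp_path hUc γ) 0

lemma bddBelow_range_iSup_comp_path (hUc : Continuous U) (x y : Eucl d) :
    BddBelow (range fun γ : Path x y => ⨆ t, U (γ t)) :=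
  ⟨U x, forall_mem_range.2 (le_iSup_comp_path hUc)⟩

lemma le_commHeight (hUc : Continuous U) (x y : Eucl d) : U x ≤ commHeight U x y :=
  le_ciInf (le_iSup_comp_path hUc)

lemma commHeight_le_iSup (hUc : Continuous U) {x y : Eucl d} (γ : Path x y) :
    commHeight U x y ≤ ⨆ t, U (γ t) :=
  ciInf_le (bddBelow_range_iSup_comp_path hUc x y) γ

lemma commHeight_self_le (hUc : Continuous U) (x : Eucl d) : commHeight U x x ≤ U x := by
  simpa using commHeight_le_iSup hUc (Path.refl x)

lemma commHeight_comm (hUc : Continuous U) (x y : Eucl d) :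
    commHeight U x y = commHeight U y x := by
  have key : ∀ u v : Eucl d, commHeight U u v ≤ commHeight U v u := fun u v =>
    le_ciInf fun γ => by
      simpa [Path.symm_apply, unitInterval.symm_bijective.surjective.iSup_comp
        (fun t => U (γ t))] using commHeight_le_iSup hUc γ.symm
  exact (key x y).antisymm (key y x)

lemma commHeight_le_max (hUc : Continuous U) (x y z : Eucl d) :
    commHeight U x z ≤ max (commHeight U x y) (commHeight U y z) := by
  refine le_of_forall_gt_imp_ge_of_dense fun c hc => ?_
  obtain ⟨γ, hγ⟩ := exists_lt_of_ciInf_lt ((le_max_left _ _).trans_lt hc)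
  obtain ⟨δ, hδ⟩ := exists_lt_of_ciInf_lt ((le_max_right _ _).trans_lt hc)
  refine (commHeight_le_iSup hUc (γ.trans δ)).trans (ciSup_le fun t => ?_)
  have hmem : (γ.trans δ) t ∈ range γ ∪ range δ := Path.trans_range γ δ ▸ mem_range_self t
  rcases hmem with ⟨s, hs⟩ | ⟨s, hs⟩
  · exact hs ▸ (le_ciSup (bddAbove_range_comp_path hUc γ) s).trans hγ.le
  · exact hs ▸ (le_ciSup (bddAbove_range_comp_path hUc δ) s).trans hδ.le

end commHeight

section commHeightSet

lemma commHeightSet_le_commHeight {A B : Set (Eucl d)} {x y : Eucl d} (hx : x ∈ A) (hy : y ∈ B) :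
    commHeightSet U A B ≤ commHeight U x y :=
  iInf₂_le_of_le x hx (iInf₂_le y hy)

lemma le_commHeightSet {A B : Set (Eucl d)} {e : EReal}
    (h : ∀ x ∈ A, ∀ y ∈ B, e ≤ commHeight U x y) : e ≤ commHeightSet U A B :=
  le_iInf₂ fun x hx => le_iInf₂ (h x hx)

lemma commHeightSet_anti_right {A B B' : Set (Eucl d)} (h : B ⊆ B') :
    commHeightSet U A B' ≤ commHeightSet U A B :=
  le_commHeightSet fun _ hx _ hy => commHeightSet_le_commHeight hx (h hy)

lemma commHeightSet_comm (hUc : Continuous U) (A B : Set (Eucl d)) :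
    commHeightSet U A B = commHeightSet U B A := by
  have key : ∀ A B : Set (Eucl d), commHeightSet U A B ≤ commHeightSet U B A := fun A B =>
    le_commHeightSet fun y hy x hx =>
      commHeight_comm hUc x y ▸ commHeightSet_le_commHeight hx hy
  exact (key A B).antisymm (key B A)

lemma commHeightSet_ne_top {A B : Set (Eucl d)} (hA : A.Nonempty) (hB : B.Nonempty) :
    commHeightSet U A B ≠ ⊤ :=
  ne_top_of_le_ne_top (EReal.coe_ne_top _) (commHeightSet_le_commHeight hA.some_mem hB.some_mem)

lemma coe_le_commHeightSet (hUc : Continuous U) {A : Set (Eucl d)} {c : ℝ}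
    (hA : ∀ x ∈ A, U x = c) (B : Set (Eucl d)) : (c : EReal) ≤ commHeightSet U A B :=
  le_commHeightSet fun x hx y _ => EReal.coe_le_coe_iff.2 (hA x hx ▸ le_commHeight hUc x y)

lemma commHeightSet_le_of_le_of_le (hUc : Continuous U) {A B C : Set (Eucl d)} {K : EReal}
    (hAB : commHeightSet U A B ≤ K) (hBC : commHeightSet U B C ≤ K)
    (hB : ∀ b ∈ B, ∀ b' ∈ B, (commHeight U b b' : EReal) ≤ K) :
    commHeightSet U A C ≤ K := by
  refine le_of_forall_gt_imp_ge_of_dense fun e he => ?_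
  have h1 := hAB.trans_lt he
  have h2 := hBC.trans_lt he
  simp only [commHeightSet, iInf_lt_iff, exists_prop] at h1 h2
  obtain ⟨x, hx, b, hb, hxb⟩ := h1
  obtain ⟨b', hb', z, hz, hb'z⟩ := h2
  have hbb' := (hB b hb b' hb').trans he.le
  have hxz : commHeight U x z ≤
      max (commHeight U x b) (max (commHeight U b b') (commHeight U b' z)) :=
    (commHeight_le_max hUc x b z).trans (max_le_max le_rfl (commHeight_le_max hUc b b' z))
  refine (commHeightSet_le_commHeight hx hz).trans ((EReal.coe_le_coe_iff.2 hxz).trans ?_)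
  rw [EReal.coe_strictMono.monotone.map_max, EReal.coe_strictMono.monotone.map_max]
  exact max_le hxb.le (max_le hbb' hb'z.le)

end commHeightSet

section simpleSets

lemma subset_tildeSet {M M' : Set (Eucl d)} {c : ℝ} (hdisj : Disjoint M' M)
    (hloc : ∀ m ∈ M', IsLocalMin U m) (hle : ∀ m ∈ M', U m ≤ c) : M' ⊆ tildeSet U M c :=
  fun m hm => ⟨hloc m hm, disjoint_left.1 hdisj hm, hle m hm⟩

lemma commHeight_le_of_isBound (hUc : Continuous U) {M : Set (Eucl d)} {c : ℝ}
    (hM : ∀ m ∈ M, U m = c) (hbound : IsBound U M c) {m m' : Eucl d} (hm : m ∈ M)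
    (hm' : m' ∈ M) : (commHeight U m m' : EReal) ≤ commHeightSet U M (tildeSet U M c) := by
  rcases hbound with ⟨m₀, rfl⟩ | hlt
  · rw [mem_singleton_iff.1 hm, mem_singleton_iff.1 hm']
    refine le_trans ?_ (coe_le_commHeightSet hUc hM _)
    exact EReal.coe_le_coe_iff.2 (hM m₀ rfl ▸ commHeight_self_le hUc m₀)
  · exact (hlt m hm m' hm').le

lemma commHeightSet_tildeSet_le_of_le (hUc : Continuous U) {M M' : Set (Eucl d)} {c c' : ℝ}
    (hdisj : Disjoint M M') (hloc : ∀ m ∈ M, IsLocalMin U m) (hM : ∀ m ∈ M, U m = c)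
    (hc : c ≤ c') : commHeightSet U M' (tildeSet U M' c') ≤ commHeightSet U M M' :=
  commHeightSet_comm hUc M M' ▸
    commHeightSet_anti_right (subset_tildeSet hdisj hloc fun m hm => (hM m hm).trans_le hc)

lemma commHeightSet_tildeSet_le_of_xiSet_le (hUc : Continuous U) {M M' : Set (Eucl d)}
    {c c' : ℝ} (hdisj : Disjoint M M') (hloc : ∀ m ∈ M, IsLocalMin U m) (hM : ∀ m ∈ M, U m = c)
    (hΞ : XiSet U M' c' ≤ XiSet U M c)
    (hMM' : commHeightSet U M M' ≤ commHeightSet U M (tildeSet U M c)) :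
    commHeightSet U M' (tildeSet U M' c') ≤ commHeightSet U M (tildeSet U M c) := by
  rcases le_total c' c with hc | hc
  · exact EReal.le_of_sub_le_sub_of_le hΞ hc
  · exact (commHeightSet_tildeSet_le_of_le hUc hdisj hloc hM hc).trans hMM'

end simpleSets

theorem commHeightSet_chain_le {a : ℕ} (h0 : 0 < a) (hUc : Continuous U)
    {ms : Fin a → Set (Eucl d)} {cs : Fin a → ℝ}
    (hdisj : ∀ i j, i ≠ j → Disjoint (ms i) (ms j))
    (hloc : ∀ i, ∀ m ∈ ms i, IsLocalMin U m)
    (hsimple : ∀ i, ∀ m ∈ ms i, U m = cs i)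
    (hbound : ∀ i, IsBound U (ms i) (cs i))
    (hadj : ∀ i : Fin a, (hia : i.1 + 1 < a) →
      commHeightSet U (ms i) (tildeSet U (ms i) (cs i)) =
        commHeightSet U (ms i) (ms ⟨i.1 + 1, hia⟩))
    (hXi : ∀ j : Fin a, 1 ≤ j.1 → j.1 + 1 < a →
      XiSet U (ms j) (cs j) ≤ XiSet U (ms ⟨0, h0⟩) (cs ⟨0, h0⟩))
    {j : ℕ} (hj : 1 ≤ j) (hja : j < a) :
    commHeightSet U (ms ⟨0, h0⟩) (ms ⟨j, hja⟩) ≤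
      commHeightSet U (ms ⟨0, h0⟩) (tildeSet U (ms ⟨0, h0⟩) (cs ⟨0, h0⟩)) := by
  induction j, hj using Nat.le_induction with
  | base => exact (hadj ⟨0, h0⟩ hja).ge
  | succ n hn ih =>
    have hna : n < a := by omega
    have hΘn := commHeightSet_tildeSet_le_of_xiSet_le hUc
      (hdisj ⟨0, h0⟩ ⟨n, hna⟩ (by simp only [ne_eq, Fin.mk.injEq]; omega))
      (hloc _) (hsimple _) (hXi ⟨n, hna⟩ hn hja) (ih hna)
    refine commHeightSet_le_of_le_of_le hUc (ih hna) ((hadj ⟨n, hna⟩ hja).symm ▸ hΘn) ?_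
    exact fun b hb b' hb' =>
      (commHeight_le_of_isBound hUc (hsimple _) (hbound _) hb hb').trans hΘn

theorem statement6 {d : ℕ}
    (U : Eucl d → ℝ) (hUc : Continuous U)
    (a : ℕ) (ha : 2 ≤ a)
    (ms : Fin a → Set (Eucl d)) (cs : Fin a → ℝ)
    (hdisj : ∀ i j, i ≠ j → Disjoint (ms i) (ms j))
    (hne : ∀ i, (ms i).Nonempty)
    (hloc : ∀ i, ∀ m ∈ ms i, IsLocalMin U m)
    (hsimple : ∀ i, ∀ m ∈ ms i, U m = cs i)
    (hbound : ∀ i, IsBound U (ms i) (cs i))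
    (hadj : ∀ i : Fin a, (hia : i.1 + 1 < a) →
      commHeightSet U (ms i) (tildeSet U (ms i) (cs i)) =
        commHeightSet U (ms i) (ms ⟨i.1 + 1, hia⟩))
    (hXi : ∀ j : Fin a, 1 ≤ j.1 → j.1 + 1 < a →
      XiSet U (ms j) (cs j) ≤ XiSet U (ms ⟨0, by omega⟩) (cs ⟨0, by omega⟩))
    (hXia : XiSet U (ms ⟨0, by omega⟩) (cs ⟨0, by omega⟩) ≤
      XiSet U (ms ⟨a - 1, by omega⟩) (cs ⟨a - 1, by omega⟩)) :
    cs ⟨a - 1, by omega⟩ ≤ cs ⟨0, by omega⟩ ∧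
      commHeightSet U (ms ⟨0, by omega⟩)
          (tildeSet U (ms ⟨0, by omega⟩) (cs ⟨0, by omega⟩)) =
        commHeightSet U (ms ⟨0, by omega⟩) (ms ⟨a - 1, by omega⟩) := by
  set i₀ : Fin a := ⟨0, by omega⟩
  set iₐ : Fin a := ⟨a - 1, by omega⟩
  have hne₀ₐ : i₀ ≠ iₐ := by simp only [i₀, iₐ, ne_eq, Fin.ext_iff]; omega
  have hchain : commHeightSet U (ms i₀) (ms iₐ) ≤
      commHeightSet U (ms i₀) (tildeSet U (ms i₀) (cs i₀)) :=
    commHeightSet_chain_le (by omega) hUc hdisj hloc hsimple hbound hadj hXi (by omega) _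
  have hcs : cs iₐ ≤ cs i₀ := by
    rcases le_total (cs iₐ) (cs i₀) with h | h
    · exact h
    refine EReal.le_of_sub_coe_le_sub_coe ?_ ?_ ?_ hXia
    · rw [hadj i₀ (show 0 + 1 < a by omega)]
      exact commHeightSet_ne_top (hne _) (hne _)
    · exact ne_bot_of_le_ne_bot (EReal.coe_ne_bot _) (coe_le_commHeightSet hUc (hsimple _) _)
    · exact (commHeightSet_tildeSet_le_of_le hUc (hdisj _ _ hne₀ₐ) (hloc _) (hsimple _) h).trans
        hchain
  refine ⟨hcs, le_antisymm (commHeightSet_anti_right ?_) hchain⟩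
  exact subset_tildeSet (hdisj _ _ hne₀ₐ.symm) (hloc _) fun m hm => (hsimple _ m hm).trans_le hcs
end
end

section
/- Let H₀ ∈ ℝ and let H be a connected component of the open set {x ∈ ℝ^d : U(x) < H₀}. Let M ⊆ M₀ be a finite, nonempty, simple and bound set with M ∩ H ≠ ∅ and M ∖ H ≠ ∅. Then every m'' ∈ M₀ ∩ H with U(m'') ≤ U(M) belongs to M. -/
open Set Filter Metric
open scoped RealInnerProductSpace

noncomputable section

section Aux

variable {d : ℕ} {U : Eucl d → ℝ}

lemma le_pathSup (hUc : Continuous U) {x y : Eucl d} (γ : Path x y) (t : unitInterval) :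
    U (γ t) ≤ ⨆ s : unitInterval, U (γ s) :=
  le_ciSup (isCompact_range (hUc.comp γ.continuous)).bddAbove t

lemma source_le_pathSup (hUc : Continuous U) {x y : Eucl d} (γ : Path x y) :
    U x ≤ ⨆ s : unitInterval, U (γ s) := by
  have := le_pathSup hUc γ 0
  rwa [γ.source] at this

lemma bddBelow_pathSups (hUc : Continuous U) (x y : Eucl d) :
    BddBelow (Set.range fun γ : Path x y => ⨆ s : unitInterval, U (γ s)) := by
  refine ⟨U x, ?_⟩
  rintro r ⟨γ, rfl⟩
  exact source_le_pathSup hUc γ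

lemma commHeight_le_pathSup (hUc : Continuous U) {x y : Eucl d} (γ : Path x y) :
    commHeight U x y ≤ ⨆ s : unitInterval, U (γ s) :=
  ciInf_le (bddBelow_pathSups hUc x y) γ

end Aux

theorem statement7 {d : ℕ} (hd : 1 ≤ d)
    (U : Eucl d → ℝ) (hUc : Continuous U)
    (H₀ : ℝ) (H : Set (Eucl d)) (hH : IsCompOf {x | U x < H₀} H)
    (M : Set (Eucl d)) (hMfin : M.Finite) (hMne : M.Nonempty)
    (hMloc : ∀ m ∈ M, IsLocalMin U m)
    (c : ℝ) (hc : ∀ m ∈ M, U m = c) (hMbd : IsBound U M c)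
    (hint : (M ∩ H).Nonempty) (hout : (M \ H).Nonempty) :
    ∀ m'', IsLocalMin U m'' → m'' ∈ H → U m'' ≤ c → m'' ∈ M := by
  intro m'' hm''loc hm''H hm''c
  by_contra hm''M
  obtain ⟨m, hmM, hmH⟩ := hint
  obtain ⟨m', hm'M, hm'H⟩ := hout
  set S : Set (Eucl d) := {x | U x < H₀} with hS
  obtain ⟨x₀, hx₀, hHeq⟩ := hH
  have hSopen : IsOpen S := isOpen_lt hUc continuous_const
  have hHopen : IsOpen H := hHeq ▸ hSopen.connectedComponentIn
  have hHsub : H ⊆ S := hHeq ▸ connectedComponentIn_subset S x₀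
  have hHm : H = connectedComponentIn S m := by
    rw [hHeq]; exact connectedComponentIn_eq (hHeq ▸ hmH)
  have hHconn : IsConnected H := hHeq ▸ (isConnected_connectedComponentIn_iff.mpr hx₀)
  have hHpath : IsPathConnected H := hHopen.isConnected_iff_isPathConnected.mp hHconn
  obtain ⟨γ, hγ⟩ : JoinedIn H m m'' := hHpath.joinedIn m hmH m'' hm''H
  -- key1 : commHeight U m m'' < H₀
  obtain ⟨t₀, -, ht₀⟩ :=
    isCompact_univ.exists_isMaxOn Set.univ_nonempty (hUc.comp γ.continuous).continuousOn
  have hsup_le : (⨆ s : unitInterval, U (γ s)) ≤ U (γ t₀) :=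
    ciSup_le fun t => ht₀ (Set.mem_univ t)
  have key1 : commHeight U m m'' < H₀ :=
    lt_of_le_of_lt ((commHeight_le_pathSup hUc γ).trans hsup_le) (hHsub (hγ t₀))
  -- key2 : H₀ ≤ commHeight U m m'
  haveI : Nonempty (Path m m') := ⟨PathConnectedSpace.somePath m m'⟩
  have key2 : H₀ ≤ commHeight U m m' := by
    refine le_ciInf fun γ' => ?_
    by_contra hlt
    push_neg at hlt
    have hmem : ∀ t, γ' t ∈ S := fun t => lt_of_le_of_lt (le_pathSup hUc γ' t) hlt
    have hrange : Set.range γ' ⊆ connectedComponentIn S m := by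
      refine (isPreconnected_range γ'.continuous).subset_connectedComponentIn
        ⟨0, γ'.source⟩ ?_
      rintro _ ⟨t, rfl⟩; exact hmem t
    have : m' ∈ connectedComponentIn S m := hrange ⟨1, γ'.target⟩
    exact hm'H (hHm ▸ this)
  -- m'' is in the tilde set
  have htilde : m'' ∈ tildeSet U M c := ⟨hm''loc, hm''M, hm''c⟩
  have hset : commHeightSet U M (tildeSet U M c) ≤ (commHeight U m m'' : EReal) := by
    refine le_trans (iInf₂_le m hmM) (iInf₂_le m'' htilde)
  rcases hMbd with ⟨a, ha⟩ | hbd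
  · subst ha
    rw [Set.mem_singleton_iff] at hmM hm'M
    exact hm'H (hm'M ▸ hmM ▸ hmH)
  · have h1 : (commHeight U m m' : EReal) < (commHeight U m m'' : EReal) :=
      lt_of_lt_of_le (hbd m hmM m' hm'M) hset
    have h2 : commHeight U m m' < commHeight U m m'' := by exact_mod_cast h1
    linarith [key1, key2]

end
end
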